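/- arXiv:0809.2093 — 5 statements merged into one kernel-verified Lean document; each statement's English description precedes it below -/
import Mathlib

section
/- Define γ₂(A) = max over unit vectors u ∈ ℝⁿ, v ∈ ℝᵐ of ‖A ∘ (v uᵀ)‖_tr. Then for any nonzero real m×n matrix A, rk(A) ≥ γ₂(A)² / ‖A‖_∞², where ‖A‖_∞ is the maximum absolute value of an entry of A. -/
open Matrix Finset

noncomputable def traceNorm {m n : ℕ} (A : Matrix (Fin m) (Fin n) ℝ) : ℝ :=
  ∑ i, Real.sqrt ((show (Aᵀ * A).IsHermitian by
    simpa [Matrix.conjTranspose_eq_transpose_of_trivial] using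
      Matrix.isHermitian_conjTranspose_mul_self A).eigenvalues i)

noncomputable def linfNorm {m n : ℕ} (A : Matrix (Fin m) (Fin n) ℝ) : ℝ :=
  ⨆ i, ⨆ j, |A i j|

noncomputable def gamma2 {m n : ℕ} (A : Matrix (Fin m) (Fin n) ℝ) : ℝ :=
  sSup { t | ∃ (u : Fin n → ℝ) (v : Fin m → ℝ), (∑ j, (u j) ^ 2 = 1) ∧ (∑ i, (v i) ^ 2 = 1) ∧
      t = traceNorm (Matrix.hadamard A (Matrix.vecMulVec v u)) }

/-!
Write `A ⊙ (v uᵀ) = diag v * A * diag u`, so its rank is at most `rk A`, and since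
`∑ᵢⱼ vᵢ² uⱼ² = 1` its squared Frobenius norm is at most `‖A‖_∞²`. Cauchy–Schwarz over the
nonzero singular values gives `‖M‖_tr² ≤ rk M · ‖M‖_F²` for every matrix `M`, hence
`γ₂(A)² ≤ rk A · ‖A‖_∞²`.
-/

lemma abs_le_linfNorm {m n : ℕ} (A : Matrix (Fin m) (Fin n) ℝ) (i : Fin m) (j : Fin n) :
    |A i j| ≤ linfNorm A :=
  (le_ciSup (Set.finite_range _).bddAbove j).trans
    (le_ciSup (f := fun i' => ⨆ j', |A i' j'|) (Set.finite_range _).bddAbove i)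

lemma traceNorm_nonneg {m n : ℕ} (M : Matrix (Fin m) (Fin n) ℝ) : 0 ≤ traceNorm M :=
  sum_nonneg fun _ _ => Real.sqrt_nonneg _

lemma sum_eigenvalues_conjTranspose_mul_self {m n : ℕ} (M : Matrix (Fin m) (Fin n) ℝ) :
    ∑ k, (isHermitian_conjTranspose_mul_self M).eigenvalues k = ∑ i, ∑ j, M i j ^ 2 := by
  have h := (isHermitian_conjTranspose_mul_self M).trace_eq_sum_eigenvalues
  simp only [RCLike.ofReal_real_eq_id, id_eq] at h
  rw [← h, trace, sum_comm]
  simp [mul_apply, sq]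

lemma traceNorm_sq_le_rank_mul_sum_sq {m n : ℕ} (M : Matrix (Fin m) (Fin n) ℝ) :
    traceNorm M ^ 2 ≤ M.rank * ∑ i, ∑ j, M i j ^ 2 := by
  set hH := isHermitian_conjTranspose_mul_self M
  set ev := hH.eigenvalues
  set s := univ.filter fun k => ev k ≠ 0
  have hev : ∀ k, 0 ≤ ev k := eigenvalues_conjTranspose_mul_self_nonneg M
  -- `traceNorm` is stated with `Mᵀ * M`, which over `ℝ` is `Mᴴ * M` by unfolding `star`.
  have h_trace : traceNorm M = ∑ k ∈ s, √(ev k) := by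
    refine (sum_filter_of_ne fun k _ hk => ?_).symm
    exact fun h0 => hk (by change √(ev k) = 0; rw [h0, Real.sqrt_zero])
  have h_card : (#s : ℝ) = M.rank := by
    rw [← rank_conjTranspose_mul_self, hH.rank_eq_card_non_zero_eigs, Fintype.card_subtype]
  calc traceNorm M ^ 2 = (∑ k ∈ s, √(ev k)) ^ 2 := by rw [h_trace]
    _ ≤ #s * ∑ k ∈ s, √(ev k) ^ 2 := sq_sum_le_card_mul_sum_sq
    _ = M.rank * ∑ k ∈ s, ev k := by simp only [h_card, Real.sq_sqrt (hev _)]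
    _ ≤ M.rank * ∑ k, ev k := by
      gcongr
      exacts [fun k _ _ => hev k, subset_univ s]
    _ = M.rank * ∑ i, ∑ j, M i j ^ 2 := by rw [sum_eigenvalues_conjTranspose_mul_self]

lemma hadamard_vecMulVec_eq_diagonal_mul_mul_diagonal {m n R : Type*} [Fintype m] [Fintype n]
    [DecidableEq m] [DecidableEq n] [CommSemiring R] (A : Matrix m n R) (v : m → R) (u : n → R) :
    A ⊙ vecMulVec v u = diagonal v * A * diagonal u := by
  ext i j
  simp only [hadamard_apply, vecMulVec_apply, mul_diagonal, diagonal_mul]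
  ring

lemma rank_hadamard_vecMulVec_le {m n R : Type*} [Fintype m] [Fintype n] [CommSemiring R]
    [StrongRankCondition R] (A : Matrix m n R) (v : m → R) (u : n → R) : (A ⊙ vecMulVec v u).rank ≤ A.rank := by
  classical
  rw [hadamard_vecMulVec_eq_diagonal_mul_mul_diagonal]
  exact (rank_mul_le_left _ _).trans (rank_mul_le_right _ _)

lemma sum_sq_hadamard_vecMulVec_le {m n : ℕ} (A : Matrix (Fin m) (Fin n) ℝ) (v : Fin m → ℝ)
    (u : Fin n → ℝ) :
    ∑ i, ∑ j, (A ⊙ vecMulVec v u) i j ^ 2 ≤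
      linfNorm A ^ 2 * ((∑ i, v i ^ 2) * ∑ j, u j ^ 2) := by
  rw [sum_mul_sum, mul_sum]
  refine sum_le_sum fun i _ => ?_
  rw [mul_sum]
  refine sum_le_sum fun j _ => ?_
  have h_entry : A i j ^ 2 ≤ linfNorm A ^ 2 := by
    rw [← sq_abs]
    exact pow_le_pow_left₀ (abs_nonneg _) (abs_le_linfNorm A i j) 2
  calc (A ⊙ vecMulVec v u) i j ^ 2 = A i j ^ 2 * (v i ^ 2 * u j ^ 2) := by
        rw [hadamard_apply, vecMulVec_apply]; ring
    _ ≤ linfNorm A ^ 2 * (v i ^ 2 * u j ^ 2) := by gcongr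

lemma traceNorm_hadamard_vecMulVec_sq_le {m n : ℕ} (A : Matrix (Fin m) (Fin n) ℝ)
    {u : Fin n → ℝ} {v : Fin m → ℝ} (hu : ∑ j, u j ^ 2 = 1) (hv : ∑ i, v i ^ 2 = 1) :
    traceNorm (A ⊙ vecMulVec v u) ^ 2 ≤ A.rank * linfNorm A ^ 2 :=
  calc traceNorm (A ⊙ vecMulVec v u) ^ 2
      ≤ (A ⊙ vecMulVec v u).rank * ∑ i, ∑ j, (A ⊙ vecMulVec v u) i j ^ 2 :=
        traceNorm_sq_le_rank_mul_sum_sq _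
    _ ≤ A.rank * (linfNorm A ^ 2 * ((∑ i, v i ^ 2) * ∑ j, u j ^ 2)) := by
        gcongr
        · exact_mod_cast rank_hadamard_vecMulVec_le A v u
        · exact sum_sq_hadamard_vecMulVec_le A v u
    _ = A.rank * linfNorm A ^ 2 := by rw [hu, hv, mul_one, mul_one]

lemma gamma2_sq_le_rank_mul_linfNorm_sq {m n : ℕ} (A : Matrix (Fin m) (Fin n) ℝ) :
    gamma2 A ^ 2 ≤ A.rank * linfNorm A ^ 2 := by
  have h_nonneg : 0 ≤ gamma2 A :=
    Real.sSup_nonneg <| by rintro t ⟨u, v, -, -, rfl⟩; exact traceNorm_nonneg _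
  have h_le : gamma2 A ≤ √(A.rank * linfNorm A ^ 2) :=
    Real.sSup_le (by
      rintro t ⟨u, v, hu, hv, rfl⟩
      exact Real.le_sqrt_of_sq_le (traceNorm_hadamard_vecMulVec_sq_le A hu hv))
      (Real.sqrt_nonneg _)
  calc gamma2 A ^ 2 ≤ √(A.rank * linfNorm A ^ 2) ^ 2 := by gcongr
    _ = A.rank * linfNorm A ^ 2 := Real.sq_sqrt (by positivity)

theorem rank_ge_gamma2_sq_div_linf_sq_general {m n : ℕ} (A : Matrix (Fin m) (Fin n) ℝ) :
    (A.rank : ℝ) ≥ gamma2 A ^ 2 / linfNorm A ^ 2 := by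
  rcases (sq_nonneg (linfNorm A)).eq_or_lt with h_zero | h_pos
  · rw [← h_zero, div_zero]
    exact Nat.cast_nonneg _
  · exact (div_le_iff₀ h_pos).2 (gamma2_sq_le_rank_mul_linfNorm_sq A)

theorem rank_ge_gamma2_sq_div_linf_sq {m n : ℕ} (A : Matrix (Fin m) (Fin n) ℝ)
    (hA : A ≠ 0) :
    (A.rank : ℝ) ≥ gamma2 A ^ 2 / linfNorm A ^ 2 :=
  rank_ge_gamma2_sq_div_linf_sq_general A
end

section
/- Fix ε > 0. Let a₃ = 1/(2 + 6ε + 4ε²) and a₁ = 1 + a₃, and define p(x) = a₁x − a₃x³. Then p is odd, and p maps [−1−2ε, −1] into [−1−ε, −1]. -/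
/-!
Writing `p(x) = a₁ x - a₃ x³`, the choice of `a₃` makes `p(1) = p(1 + 2ε) = 1`, so
`p(y) - 1 = a₃ (y - 1)(1 + 2ε - y)(y + 2 + 2ε)` (the third root is fixed by the vanishing
`x²`-coefficient). On `[1, 1 + 2ε]` this is nonnegative and, by AM-GM on the first two factors,
at most `a₃ ε² (3 + 4ε) ≤ ε`. Oddness transports this to `[-1 - 2ε, -1]`.
-/

theorem cubic_sub_one_eq_mul {ε a₃ : ℝ} (ha₃ : a₃ * (2 + 6 * ε + 4 * ε ^ 2) = 1) (y : ℝ) :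
    (1 + a₃) * y - a₃ * y ^ 3 - 1 = a₃ * ((y - 1) * (1 + 2 * ε - y) * (y + 2 + 2 * ε)) := by
  linear_combination (1 - y) * ha₃

theorem mul_sub_mul_le_of_mem_Icc {ε s : ℝ} (hs : s ∈ Set.Icc 0 (2 * ε)) :
    s * (2 * ε - s) * (3 + 2 * ε + s) ≤ ε * (2 + 6 * ε + 4 * ε ^ 2) := by
  obtain ⟨hs₀, hs₁⟩ := hs
  have hε : 0 ≤ ε := by linarith
  calc s * (2 * ε - s) * (3 + 2 * ε + s)
      ≤ ε ^ 2 * (3 + 4 * ε) := by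
        have hAMGM : s * (2 * ε - s) ≤ ε ^ 2 := by nlinarith [sq_nonneg (s - ε)]
        exact mul_le_mul hAMGM (by linarith) (by linarith) (sq_nonneg ε)
    _ ≤ ε * (2 + 6 * ε + 4 * ε ^ 2) := by nlinarith

theorem cubic_mem_Icc_of_mem_Icc {ε a₃ y : ℝ} (ha₃ : a₃ = 1 / (2 + 6 * ε + 4 * ε ^ 2))
    (hy : y ∈ Set.Icc 1 (1 + 2 * ε)) :
    (1 + a₃) * y - a₃ * y ^ 3 ∈ Set.Icc 1 (1 + ε) := by
  obtain ⟨hy₀, hy₁⟩ := hy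
  have hε : 0 ≤ ε := by linarith
  have hD : 0 < 2 + 6 * ε + 4 * ε ^ 2 := by positivity
  have ha₃D : a₃ * (2 + 6 * ε + 4 * ε ^ 2) = 1 := by
    rw [ha₃, one_div_mul_cancel hD.ne']
  have ha₃_pos : 0 < a₃ := by rw [ha₃]; positivity
  have hfactor := cubic_sub_one_eq_mul ha₃D y
  have hprod_nonneg : 0 ≤ (y - 1) * (1 + 2 * ε - y) * (y + 2 + 2 * ε) := by
    apply mul_nonneg (mul_nonneg _ _) _ <;> linarith
  have hprod_le : (y - 1) * (1 + 2 * ε - y) * (y + 2 + 2 * ε) ≤ ε * (2 + 6 * ε + 4 * ε ^ 2) := by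
    convert mul_sub_mul_le_of_mem_Icc (s := y - 1) ⟨by linarith, by linarith⟩ using 2 <;> ring
  have hupper : a₃ * ((y - 1) * (1 + 2 * ε - y) * (y + 2 + 2 * ε)) ≤ ε :=
    calc _ ≤ a₃ * (ε * (2 + 6 * ε + 4 * ε ^ 2)) := by gcongr
      _ = ε := by linear_combination ε * ha₃D
  constructor <;> linarith [mul_nonneg ha₃_pos.le hprod_nonneg]

theorem poly_odd_and_neg_interval_general (ε a₁ a₃ : ℝ)
    (ha₃ : a₃ = 1 / (2 + 6 * ε + 4 * ε ^ 2)) (ha₁ : a₁ = 1 + a₃) :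
    (∀ x : ℝ, a₁ * (-x) - a₃ * (-x) ^ 3 = -(a₁ * x - a₃ * x ^ 3)) ∧
    (∀ x : ℝ, -1 - 2 * ε ≤ x → x ≤ -1 →
      -1 - ε ≤ a₁ * x - a₃ * x ^ 3 ∧ a₁ * x - a₃ * x ^ 3 ≤ -1) := by
  have hodd (x : ℝ) : a₁ * (-x) - a₃ * (-x) ^ 3 = -(a₁ * x - a₃ * x ^ 3) := by ring
  refine ⟨hodd, fun x hx₀ hx₁ => ?_⟩
  have hpos := cubic_mem_Icc_of_mem_Icc ha₃ (y := -x) ⟨by linarith, by linarith⟩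
  rw [← ha₁, hodd] at hpos
  exact ⟨by linarith [hpos.2], by linarith [hpos.1]⟩

theorem poly_odd_and_neg_interval (ε a₁ a₃ : ℝ) (hε : 0 < ε)
    (ha₃ : a₃ = 1 / (2 + 6 * ε + 4 * ε ^ 2)) (ha₁ : a₁ = 1 + a₃) :
    (∀ x : ℝ, a₁ * (-x) - a₃ * (-x) ^ 3 = -(a₁ * x - a₃ * x ^ 3)) ∧
    (∀ x : ℝ, -1 - 2 * ε ≤ x → x ≤ -1 →
      -1 - ε ≤ a₁ * x - a₃ * x ^ 3 ∧ a₁ * x - a₃ * x ^ 3 ≤ -1) :=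
  poly_odd_and_neg_interval_general ε a₁ a₃ ha₃ ha₁
end

section
/- For every ε ≥ 0, with a₃ = 1/(2 + 6ε + 4ε²), the inequality (2/(3√3)) · (1+a₃)^{3/2} / √a₃ ≤ 1 + ε holds. Equivalently, (2/(3√3)) · √(2+6ε+4ε²)/(1+ε) · ((3+6ε+4ε²)/(2+6ε+4ε²))^{3/2} ≤ 1. -/
/-!
Squaring turns the claim into `4 (1 + a₃)³ ≤ 27 a₃ (1 + ε)²`. Writing `D = 2 + 6ε + 4ε²`, the
difference of the two sides is `4ε / D³` times a polynomial in `ε` with positive coefficients, so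
equality holds exactly at `ε = 0`.
-/

theorem sq_two_div_three_sqrt_three_mul_sqrt_div_sqrt {a : ℝ} (ha : 0 < a) :
    (2 / (3 * √3) * √((1 + a) ^ 3) / √a) ^ 2 = 4 * (1 + a) ^ 3 / (27 * a) := by
  rw [div_pow, mul_pow, div_pow, mul_pow, Real.sq_sqrt (pow_pos (by linarith) 3).le,
    Real.sq_sqrt ha.le, Real.sq_sqrt (by norm_num)]
  ring

theorem two_div_three_sqrt_three_mul_sqrt_div_sqrt_le {a c : ℝ} (ha : 0 < a) (hc : 0 ≤ c)
    (h : 4 * (1 + a) ^ 3 ≤ 27 * a * c ^ 2) :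
    2 / (3 * √3) * √((1 + a) ^ 3) / √a ≤ c := by
  refine (pow_le_pow_iff_left₀ (by positivity) hc two_ne_zero).mp ?_
  rw [sq_two_div_three_sqrt_three_mul_sqrt_div_sqrt ha, div_le_iff₀ (by positivity)]
  linarith

theorem four_mul_one_add_inv_pow_three_le {ε : ℝ} (hε : 0 ≤ ε) :
    4 * (1 + 1 / (2 + 6 * ε + 4 * ε ^ 2)) ^ 3 ≤
      27 * (1 / (2 + 6 * ε + 4 * ε ^ 2)) * (1 + ε) ^ 2 := by
  have hdiff : 27 * (1 / (2 + 6 * ε + 4 * ε ^ 2)) * (1 + ε) ^ 2 -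
      4 * (1 + 1 / (2 + 6 * ε + 4 * ε ^ 2)) ^ 3 =
      4 * ε * (54 + 270 * ε + 540 * ε ^ 2 + 531 * ε ^ 3 + 252 * ε ^ 4 + 44 * ε ^ 5)
        / (2 + 6 * ε + 4 * ε ^ 2) ^ 3 := by
    field_simp
    ring
  rw [← sub_nonneg, hdiff]
  positivity

theorem key_inequality (ε a₃ : ℝ) (hε : 0 ≤ ε)
    (ha₃ : a₃ = 1 / (2 + 6 * ε + 4 * ε ^ 2)) :
    2 / (3 * Real.sqrt 3) * Real.sqrt ((1 + a₃) ^ 3) / Real.sqrt a₃ ≤ 1 + ε := by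
  subst ha₃
  exact two_div_three_sqrt_three_mul_sqrt_div_sqrt_le (by positivity) (by positivity)
    (four_mul_one_add_inv_pow_three_le hε)
end

section
/- Let A be an m×n sign matrix and 1 < α. If A' is a real matrix of rank r with 1 ≤ A[i,j]·A'[i,j] ≤ 2α−1 for all i,j, then there exists a real matrix A'' of rank at most 2r³ with 1 ≤ A[i,j]·A''[i,j] ≤ α for all i,j. Consequently rk_α(A) ≤ 2·rk_{2α−1}(A)³. -/
/-!
The odd cubic `p(x) = a₁x − a₃x³` maps `[1, 2α−1]` into `[1, α]`, so applying it entrywise to a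
`(2α−1)`-approximation `B` of a sign matrix yields an `α`-approximation. Entrywise,
`p(B) = a₁B − a₃ B ⊙ B ⊙ B`, and a rank factorization shows that the rank of a Hadamard product is
at most the product of the ranks; hence `rank p(B) ≤ r + r³ ≤ 2r³`.
-/

open Matrix Finset

noncomputable def approxRank {m n : ℕ} (A : Matrix (Fin m) (Fin n) ℝ) (α : ℝ) : ℕ :=
  sInf { r | ∃ B : Matrix (Fin m) (Fin n) ℝ, B.rank = r ∧
      ∀ i j, 1 ≤ A i j * B i j ∧ A i j * B i j ≤ α }

namespace Matrix

variable {K m n : Type*} [Field K] [Fintype n]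

theorem exists_rank_factorization [Fintype m] (A : Matrix m n K) :
    ∃ (U : Matrix m (Fin A.rank) K) (V : Matrix (Fin A.rank) n K), A = U * V := by
  let S := Submodule.span K (Set.range Aᵀ)
  let b : Module.Basis (Fin A.rank) K S :=
    Module.finBasisOfFinrankEq K S A.rank_eq_finrank_span_cols.symm
  have hcol : ∀ j, Aᵀ j ∈ S := fun j => Submodule.subset_span ⟨j, rfl⟩
  refine ⟨of fun i k => (b k : m → K) i, of fun k j => b.repr ⟨Aᵀ j, hcol j⟩ k, ?_⟩
  ext i j
  have h := congrArg (fun x : S => (x : m → K) i) (b.sum_repr ⟨Aᵀ j, hcol j⟩)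
  simp only [AddSubmonoidClass.coe_finsetSum, SetLike.val_smul, Finset.sum_apply,
    Pi.smul_apply, smul_eq_mul, transpose_apply] at h
  simp only [mul_apply, of_apply, ← h, mul_comm]

theorem rank_hadamard_le [Fintype m] (A B : Matrix m n K) : (A ⊙ B).rank ≤ A.rank * B.rank := by
  obtain ⟨U, V, hA⟩ := exists_rank_factorization A
  obtain ⟨W, Z, hB⟩ := exists_rank_factorization B
  have hAB : A ⊙ B = (of fun i (p : _ × _) => U i p.1 * W i p.2) *
      (of fun (p : _ × _) j => V p.1 j * Z p.2 j) := by
    ext i j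
    simp only [hA, hB, hadamard_apply, mul_apply, of_apply, Finset.sum_mul_sum,
      ← Finset.univ_product_univ, Finset.sum_product]
    exact Finset.sum_congr rfl fun k _ => Finset.sum_congr rfl fun l _ => by ring
  calc (A ⊙ B).rank ≤ Fintype.card (Fin A.rank × Fin B.rank) :=
        hAB ▸ (rank_mul_le_left _ _).trans (rank_le_card_width _)
    _ = A.rank * B.rank := by simp

theorem rank_add_le (A B : Matrix m n K) : (A + B).rank ≤ A.rank + B.rank := by
  rw [rank, mulVecLin_add]
  exact (Submodule.finrank_mono (LinearMap.range_add_le _ _)).trans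
    (Submodule.finrank_add_le_finrank_add_finrank _ _)

theorem rank_smul_le (c : K) (A : Matrix m n K) : (c • A).rank ≤ A.rank := by
  rcases eq_or_ne c 0 with rfl | hc
  · simp
  · exact (rank_smul_of_mem_nonZeroDivisors A (mem_nonZeroDivisors_of_ne_zero hc)).le

theorem rank_map_cubic_le [Fintype m] (a₁ a₃ : K) (A : Matrix m n K) :
    (A.map fun x => a₁ * x - a₃ * x ^ 3).rank ≤ A.rank + A.rank ^ 3 := by
  have hA : (A.map fun x => a₁ * x - a₃ * x ^ 3) = a₁ • A + (-a₃) • (A ⊙ (A ⊙ A)) := by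
    ext i j
    simp only [map_apply, add_apply, smul_apply, hadamard_apply, smul_eq_mul]
    ring
  calc _ ≤ (a₁ • A).rank + ((-a₃) • (A ⊙ (A ⊙ A))).rank := hA ▸ rank_add_le _ _
    _ ≤ A.rank + A.rank * (A.rank * A.rank) := by
      gcongr
      · exact rank_smul_le _ _
      · exact (rank_smul_le _ _).trans <|
          (rank_hadamard_le _ _).trans (Nat.mul_le_mul_left _ (rank_hadamard_le _ _))
    _ = A.rank + A.rank ^ 3 := by ring

end Matrix

/-- The paper's `a₃ = 1/(2 + 6ε + 4ε²)` with `ε = α − 1` equals `1/(2α(2α−1))`, the value for which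
`p(1) = p(2α−1) = 1`. -/
noncomputable def errorReductionPoly (α t : ℝ) : ℝ :=
  (1 + (2 * α * (2 * α - 1))⁻¹) * t - (2 * α * (2 * α - 1))⁻¹ * t ^ 3

theorem errorReductionPoly_neg (α t : ℝ) :
    errorReductionPoly α (-t) = -errorReductionPoly α t := by
  simp only [errorReductionPoly]; ring

theorem mapsTo_errorReductionPoly (α : ℝ) :
    Set.MapsTo (errorReductionPoly α) (Set.Icc 1 (2 * α - 1)) (Set.Icc 1 α) := by
  rintro t ⟨ht₁, ht₂⟩
  have hD : 0 < 2 * α * (2 * α - 1) := by nlinarith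
  have hp : errorReductionPoly α t = ((2 * α * (2 * α - 1) + 1) * t - t ^ 3) /
      (2 * α * (2 * α - 1)) := by
    rw [eq_div_iff hD.ne', errorReductionPoly]
    linear_combination (t - t ^ 3) * inv_mul_cancel₀ hD.ne'
  rw [hp, Set.mem_Icc, le_div_iff₀ hD, div_le_iff₀ hD]
  constructor
  -- `(D+1)t − t³ − D = (t−1)(2α−1−t)(2α+t)` with `D = 2α(2α−1)`
  · nlinarith [mul_nonneg (mul_nonneg (sub_nonneg.2 ht₁) (sub_nonneg.2 ht₂))
      (show (0:ℝ) ≤ 2 * α + t by linarith)]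
  · nlinarith [mul_nonneg (sq_nonneg (t - α)) (show (0:ℝ) ≤ t + 2 by linarith),
      mul_nonneg (show (0:ℝ) ≤ α - 1 by linarith) (sq_nonneg (4 * t + 1 - 5 * α)),
      pow_nonneg (show (0:ℝ) ≤ α - 1 by linarith) 2, pow_nonneg (show (0:ℝ) ≤ α - 1 by linarith) 3]

section

variable {m n : Type*}

def IsApprox (A : Matrix m n ℝ) (β : ℝ) (B : Matrix m n ℝ) : Prop :=
  ∀ i j, 1 ≤ A i j * B i j ∧ A i j * B i j ≤ β

theorem IsApprox.two_mul_sub_one {A B : Matrix m n ℝ} {α : ℝ} (h : IsApprox A α B) :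
    IsApprox A (2 * α - 1) B :=
  fun i j => ⟨(h i j).1, by linarith [h i j]⟩

theorem IsApprox.map_errorReductionPoly [Fintype m] [Fintype n] {A B : Matrix m n ℝ} {α : ℝ}
    (hA : ∀ i j, A i j = 1 ∨ A i j = -1) (hB : IsApprox A (2 * α - 1) B) :
    IsApprox A α (B.map (errorReductionPoly α)) := by
  intro i j
  have hodd : A i j * errorReductionPoly α (B i j) = errorReductionPoly α (A i j * B i j) := by
    rcases hA i j with h | h <;> simp [h, errorReductionPoly_neg]
  rw [map_apply, hodd]
  exact mapsTo_errorReductionPoly α (hB i j)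

theorem exists_isApprox_rank_le [Fintype m] [Fintype n] {A B : Matrix m n ℝ} {α : ℝ}
    (hA : ∀ i j, A i j = 1 ∨ A i j = -1) (hB : IsApprox A (2 * α - 1) B) :
    ∃ C : Matrix m n ℝ, C.rank ≤ 2 * B.rank ^ 3 ∧ IsApprox A α C :=
  ⟨B.map (errorReductionPoly α),
    (rank_map_cubic_le _ _ B).trans (by linarith [Nat.le_self_pow (by norm_num : 3 ≠ 0) B.rank]),
    hB.map_errorReductionPoly hA⟩

end

theorem approxRank_le_of_forall_isApprox {m n : ℕ} {A : Matrix (Fin m) (Fin n) ℝ} {α β : ℝ}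
    {f : ℕ → ℕ} (hαβ : ∀ B, IsApprox A α B → IsApprox A β B)
    (h : ∀ B, IsApprox A β B → ∃ C, C.rank ≤ f B.rank ∧ IsApprox A α C) :
    approxRank A α ≤ f (approxRank A β) := by
  let S : ℝ → Set ℕ := fun γ => {r | ∃ B, B.rank = r ∧ IsApprox A γ B}
  change sInf (S α) ≤ f (sInf (S β))
  have hsub : S α ⊆ S β := by
    rintro _ ⟨B, hB, hBα⟩
    exact ⟨B, hB, hαβ B hBα⟩
  rcases (S β).eq_empty_or_nonempty with hβ | hβ
  -- both infima are then `sInf ∅ = 0`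
  · simp [Set.subset_empty_iff.1 (hβ ▸ hsub)]
  · obtain ⟨B, hBrank, hB⟩ := Nat.sInf_mem hβ
    obtain ⟨C, hC, hCα⟩ := h B hB
    exact (Nat.sInf_le (s := S α) ⟨C, rfl, hCα⟩).trans (hBrank ▸ hC)

theorem error_reduction_general {m n : ℕ} (A : Matrix (Fin m) (Fin n) ℝ)
    (hA : ∀ i j, A i j = 1 ∨ A i j = -1) (α : ℝ)
    (A' : Matrix (Fin m) (Fin n) ℝ) (r : ℕ) (hr : A'.rank = r)
    (happrox : ∀ i j, 1 ≤ A i j * A' i j ∧ A i j * A' i j ≤ 2 * α - 1) :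
    (∃ A'' : Matrix (Fin m) (Fin n) ℝ, A''.rank ≤ 2 * r ^ 3 ∧
      ∀ i j, 1 ≤ A i j * A'' i j ∧ A i j * A'' i j ≤ α) ∧
    approxRank A α ≤ 2 * (approxRank A (2 * α - 1)) ^ 3 :=
  ⟨hr ▸ exists_isApprox_rank_le hA happrox,
    approxRank_le_of_forall_isApprox (f := fun r => 2 * r ^ 3)
      (fun _ hB => hB.two_mul_sub_one) (fun _ hB => exists_isApprox_rank_le hA hB)⟩

theorem error_reduction {m n : ℕ} (A : Matrix (Fin m) (Fin n) ℝ)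
    (hA : ∀ i j, A i j = 1 ∨ A i j = -1) (α : ℝ) (hα : 1 < α)
    (A' : Matrix (Fin m) (Fin n) ℝ) (r : ℕ) (hr : A'.rank = r)
    (happrox : ∀ i j, 1 ≤ A i j * A' i j ∧ A i j * A' i j ≤ 2 * α - 1) :
    (∃ A'' : Matrix (Fin m) (Fin n) ℝ, A''.rank ≤ 2 * r ^ 3 ∧
      ∀ i j, 1 ≤ A i j * A'' i j ∧ A i j * A'' i j ≤ α) ∧
    approxRank A α ≤ 2 * (approxRank A (2 * α - 1)) ^ 3 :=
  error_reduction_general A hA α A' r hr happrox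
end

section
/- Let A be an m×n sign matrix and α ≥ 1. Define ν^α(A) as the minimum over matrices A' with 1 ≤ A[i,j]·A'[i,j] ≤ α for all i,j of ν(A'), where ν(B) = min Σᵢ|cᵢ| over representations B = Σᵢ cᵢ xᵢ yᵢᵀ with xᵢ ∈ {−1,+1}^m, yᵢ ∈ {−1,+1}^n. Then for any 0 < t < 1, there exists a matrix B of rank at most ⌈2 ν^α(A)² ln(4mn)/t²⌉ such that 1 ≤ A[i,j]·B[i,j] ≤ (α+t)/(1−t) for all i,j. In particular, rk_{(α+t)/(1−t)}(A) ≤ 2 ν^α(A)² ln(4mn)/t² + 1. -/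
/-
Take an approximating matrix `B'` of `A` and a decomposition `B' = ∑ₗ cₗ xₗ yₗᵀ` into sign
rank-one matrices whose weight `w = ∑ₗ |cₗ|` is close to `ν^α(A)`. Draw `d` indices `l`
independently with probability `|cₗ| / w` and average the matrices `w · sign(cₗ) xₗ yₗᵀ`: the result
has rank at most `d`, and its `(i, j)` entry is `w` times an empirical mean of `±1`-valued
variables with mean `B'ᵢⱼ / w`. Hoeffding's inequality and a union bound over the `2mn` one-sided
deviations show that for `d ≥ 2 w² log (2mn) / t²` some sample is within `t` of `B'` in every
entry, so `1 - t ≤ Aᵢⱼ Bᵢⱼ ≤ α + t`; dividing by `1 - t` gives the claim.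
-/

open Matrix Finset

noncomputable def nu {m n : ℕ} (B : Matrix (Fin m) (Fin n) ℝ) : ℝ :=
  sInf { s | ∃ (k : ℕ) (c : Fin k → ℝ) (x : Fin k → Fin m → ℝ) (y : Fin k → Fin n → ℝ),
      (∀ i j, x i j = 1 ∨ x i j = -1) ∧ (∀ i j, y i j = 1 ∨ y i j = -1) ∧
      B = ∑ i, c i • Matrix.vecMulVec (x i) (y i) ∧ s = ∑ i, |c i| }

noncomputable def nuApprox {m n : ℕ} (A : Matrix (Fin m) (Fin n) ℝ) (α : ℝ) : ℝ :=
  sInf { s | ∃ B : Matrix (Fin m) (Fin n) ℝ,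
      (∀ i j, 1 ≤ A i j * B i j ∧ A i j * B i j ≤ α) ∧ s = nu B }

open Real MeasureTheory ProbabilityTheory

section Sampling

variable {ι : Type*} [MeasurableSpace ι] (P : Measure ι) [IsProbabilityMeasure P]

theorem measureReal_pi_sum_sub_integral_ge_le {g : ι → ℝ} (hg_meas : Measurable g)
    (hg : ∀ x, g x ∈ Set.Icc (-1) 1) (d : ℕ) {ε : ℝ} (hε : 0 ≤ ε) :
    (Measure.pi fun _ : Fin d => P).real {ω | ε ≤ ∑ r, (g (ω r) - ∫ x, g x ∂P)} ≤
      exp (-ε ^ 2 / (2 * d)) := by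
  have h_indep : iIndepFun (fun (r : Fin d) (ω : Fin d → ι) => g (ω r) - ∫ x, g x ∂P)
      (Measure.pi fun _ => P) :=
    iIndepFun_pi (X := fun _ x => g x - ∫ x, g x ∂P) fun _ => (hg_meas.sub_const _).aemeasurable
  have h_subG (r : Fin d) : HasSubgaussianMGF (fun ω : Fin d → ι => g (ω r) - ∫ x, g x ∂P) 1
      (Measure.pi fun _ => P) := by
    have hP := hasSubgaussianMGF_of_mem_Icc hg_meas.aemeasurable (ae_of_all P hg)
    rw [show ((‖(1:ℝ) - -1‖₊ / 2) ^ 2 : NNReal) = 1 by norm_num] at hP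
    refine HasSubgaussianMGF.of_map (X := fun x => g x - ∫ x, g x ∂P)
      (measurable_pi_apply r).aemeasurable ?_
    rwa [(measurePreserving_eval (fun _ : Fin d => P) r).map_eq]
  simpa using HasSubgaussianMGF.measure_sum_ge_le_of_iIndepFun h_indep (s := univ)
    (fun r _ => h_subG r) hε

theorem exists_forall_abs_sum_div_sub_integral_lt {S : Type*} [Fintype S] {f : S → ι → ℝ}
    (hf_meas : ∀ s, Measurable (f s)) (hf : ∀ s x, f s x ∈ Set.Icc (-1) 1) {d : ℕ} {ε : ℝ}
    (hε : 0 < ε) (h : 2 * Fintype.card S * exp (-(d * ε ^ 2) / 2) < 1) :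
    ∃ ω : Fin d → ι, ∀ s, |(∑ r, f s (ω r)) / d - ∫ x, f s x ∂P| < ε := by
  rcases Nat.eq_zero_or_pos d with rfl | hd
  · have hS : Fintype.card S = 0 := by
      simp only [CharP.cast_eq_zero, zero_mul, neg_zero, zero_div, exp_zero, mul_one] at h
      norm_cast at h; omega
    have : IsEmpty S := Fintype.card_eq_zero_iff.mp hS
    exact ⟨finZeroElim, isEmptyElim⟩
  have hd' : (0 : ℝ) < d := Nat.cast_pos.mpr hd
  set μ := Measure.pi fun _ : Fin d => P
  let bad (s : S) : Set (Fin d → ι) :=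
    {ω | d * ε ≤ ∑ r, (f s (ω r) - ∫ x, f s x ∂P)} ∪
      {ω | d * ε ≤ ∑ r, (-f s (ω r) - ∫ x, -f s x ∂P)}
  have h_exp : exp (-(d * ε) ^ 2 / (2 * d)) = exp (-(d * ε ^ 2) / 2) := by
    congr 1; field_simp
  have h_bad (s : S) : μ.real (bad s) ≤ 2 * exp (-(d * ε ^ 2) / 2) := by
    have hneg : ∀ x, -f s x ∈ Set.Icc (-1) 1 := fun x =>
      ⟨neg_le_neg (hf s x).2, by linarith [(hf s x).1]⟩
    calc μ.real (bad s) ≤ _ := measureReal_union_le _ _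
      _ ≤ _ := add_le_add
          (measureReal_pi_sum_sub_integral_ge_le P (hf_meas s) (hf s) d (by positivity))
          (measureReal_pi_sum_sub_integral_ge_le P (hf_meas s).neg hneg d (by positivity))
      _ = _ := by rw [h_exp]; ring
  obtain ⟨ω, hω⟩ : ∃ ω, ω ∉ ⋃ s, bad s := by
    by_contra! h_all
    have : μ.real Set.univ ≤ μ.real (⋃ s, bad s) :=
      measureReal_mono fun ω _ => h_all ω
    have := this.trans (measureReal_iUnion_fintype_le bad)
    have := this.trans (sum_le_sum fun s _ => h_bad s)
    simp only [probReal_univ, sum_const, card_univ, nsmul_eq_mul] at this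
    linarith
  refine ⟨ω, fun s => ?_⟩
  simp only [bad, Set.mem_iUnion, Set.mem_union, Set.mem_ofPred_eq, not_exists, not_or,
    not_le, sum_sub_distrib, integral_neg, sum_neg_distrib, sum_const,
    card_univ, Fintype.card_fin, nsmul_eq_mul] at hω
  have h_dev : |∑ r, f s (ω r) - d * ∫ x, f s x ∂P| < d * ε :=
    abs_sub_lt_iff.mpr ⟨(hω s).1, by linarith [(hω s).2]⟩
  rw [show (∑ r, f s (ω r)) / d - ∫ x, f s x ∂P = (∑ r, f s (ω r) - d * ∫ x, f s x ∂P) / d by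
    field_simp, abs_div, Nat.abs_cast, div_lt_iff₀ hd']
  linarith

end Sampling

theorem abs_sign_le_one (a : ℝ) : |(SignType.sign a : ℝ)| ≤ 1 := by
  rcases lt_trichotomy a 0 with h | h | h <;> simp [h]

theorem rank_sum_smul_vecMulVec_le {R : Type*} [CommRing R] [StrongRankCondition R] {m n : Type*}
    [Fintype n] {d : ℕ} (a : Fin d → R) (u : Fin d → m → R) (v : Fin d → n → R) :
    (∑ r, a r • vecMulVec (u r) (v r)).rank ≤ d := by
  have : ∑ r, a r • vecMulVec (u r) (v r) =
      (of fun i r => a r * u r i) * of fun r j => v r j := by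
    ext i j; simp [Matrix.sum_apply, vecMulVec_apply, mul_apply, mul_assoc]
  rw [this]
  simpa using (rank_mul_le_left (of fun i r => a r * u r i) _).trans (rank_le_card_width _)

theorem abs_sum_smul_vecMulVec_apply_le {m n k : Type*} [Fintype k] (c : k → ℝ) (x : k → m → ℝ)
    (y : k → n → ℝ) (hx : ∀ l i, |x l i| ≤ 1) (hy : ∀ l j, |y l j| ≤ 1) (i : m) (j : n) :
    |(∑ l, c l • vecMulVec (x l) (y l)) i j| ≤ ∑ l, |c l| := by
  simp only [Matrix.sum_apply, Matrix.smul_apply, vecMulVec_apply, smul_eq_mul]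
  refine (abs_sum_le_sum_abs _ _).trans (sum_le_sum fun l _ => ?_)
  rw [abs_mul, abs_mul]
  exact mul_le_of_le_one_right (abs_nonneg _) (mul_le_one₀ (hx l i) (abs_nonneg _) (hy l j))

theorem exists_rank_le_forall_abs_sub_lt {m n k : ℕ} (c : Fin k → ℝ) (x : Fin k → Fin m → ℝ)
    (y : Fin k → Fin n → ℝ) (hx : ∀ l i, |x l i| ≤ 1) (hy : ∀ l j, |y l j| ≤ 1) {d : ℕ} {t : ℝ}
    (ht : 0 < t) (hc : 0 < ∑ l, |c l|)
    (h : 2 * m * n * exp (-(d * t ^ 2) / (2 * (∑ l, |c l|) ^ 2)) < 1) :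
    ∃ B : Matrix (Fin m) (Fin n) ℝ, B.rank ≤ d ∧
      ∀ i j, |B i j - (∑ l, c l • vecMulVec (x l) (y l)) i j| < t := by
  set w := ∑ l, |c l|
  have hp : ∑ l, ENNReal.ofReal (|c l| / w) = 1 := by
    rw [← ENNReal.ofReal_sum_of_nonneg fun l _ => by positivity, ← sum_div,
      div_self hc.ne', ENNReal.ofReal_one]
  let P : Measure (Fin k) := (PMF.ofFintype _ hp).toMeasure
  let f (ij : Fin m × Fin n) (l : Fin k) : ℝ := SignType.sign (c l) * (x l ij.1 * y l ij.2)
  have hf (ij : Fin m × Fin n) (l : Fin k) : f ij l ∈ Set.Icc (-1) 1 := by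
    rw [Set.mem_Icc, ← abs_le, abs_mul, abs_mul]
    exact mul_le_one₀ (abs_sign_le_one _) (by positivity)
      (mul_le_one₀ (hx _ _) (abs_nonneg _) (hy _ _))
  have h_mean (i : Fin m) (j : Fin n) :
      (∑ l, c l • vecMulVec (x l) (y l)) i j = w * ∫ l, f (i, j) l ∂P := by
    rw [PMF.integral_eq_sum, mul_sum]
    simp only [Matrix.sum_apply, Matrix.smul_apply, vecMulVec_apply, smul_eq_mul, f,
      PMF.ofFintype_apply, ENNReal.toReal_ofReal (div_nonneg (abs_nonneg _) hc.le)]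
    refine sum_congr rfl fun l _ => ?_
    rw [← mul_assoc, ← mul_assoc, mul_div_cancel₀ _ hc.ne']
    linear_combination -(x l i * y l j) * sign_mul_abs (c l)
  have h_union : 2 * Fintype.card (Fin m × Fin n) * exp (-(d * (t / w) ^ 2) / 2) < 1 := by
    rw [Fintype.card_prod, Fintype.card_fin, Fintype.card_fin, Nat.cast_mul, ← mul_assoc, div_pow]
    convert h using 3
    ring
  obtain ⟨ω, hω⟩ := exists_forall_abs_sum_div_sub_integral_lt P (fun _ => measurable_of_finite _)
    (fun ij => hf ij) (div_pos ht hc) h_union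
  refine ⟨∑ r, (w / d * SignType.sign (c (ω r))) • vecMulVec (x (ω r)) (y (ω r)),
    rank_sum_smul_vecMulVec_le _ _ _, fun i j => ?_⟩
  have h_sample : (∑ r, (w / d * SignType.sign (c (ω r))) • vecMulVec (x (ω r)) (y (ω r))) i j
      = w * ((∑ r, f (i, j) (ω r)) / d) := by
    simp only [Matrix.sum_apply, Matrix.smul_apply, vecMulVec_apply, smul_eq_mul, f,
      mul_sum, sum_div]
    exact sum_congr rfl fun r _ => by ring
  rw [h_sample, h_mean, ← mul_sub, abs_mul, abs_of_pos hc, ← lt_div_iff₀' hc]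
  exact hω (i, j)

theorem abs_le_one_of_eq_one_or_eq_neg_one {a : ℝ} (h : a = 1 ∨ a = -1) : |a| ≤ 1 := by
  rcases h with rfl | rfl <;> simp

theorem one_le_abs_of_one_le_mul {a b : ℝ} (ha : |a| ≤ 1) (h : 1 ≤ a * b) : 1 ≤ |b| :=
  calc 1 ≤ |a * b| := h.trans (le_abs_self _)
    _ ≤ |b| := by rw [abs_mul]; exact mul_le_of_le_one_left (abs_nonneg _) ha

theorem exists_signDecomposition {m n : ℕ} (B : Matrix (Fin m) (Fin n) ℝ) :
    ∃ (k : ℕ) (c : Fin k → ℝ) (x : Fin k → Fin m → ℝ) (y : Fin k → Fin n → ℝ),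
      (∀ l i, x l i = 1 ∨ x l i = -1) ∧ (∀ l j, y l j = 1 ∨ y l j = -1) ∧
      B = ∑ l, c l • vecMulVec (x l) (y l) := by
  let s {p : ℕ} (b : Bool) (i i' : Fin p) : ℝ := if b ∧ i' ≠ i then -1 else 1
  have hs_sign {p : ℕ} (b : Bool) (i i' : Fin p) : s b i i' = 1 ∨ s b i i' = -1 := by
    simp only [s]; split_ifs <;> simp
  -- `s false i = 𝟙` and `s true i = 2 eᵢ - 𝟙`, so `eᵢ eⱼᵀ = ¼ ∑_{a,b} (s a i) (s b j)ᵀ`.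
  have hs_sum {p : ℕ} (i i' : Fin p) : ∑ b, s b i i' = if i' = i then 2 else 0 := by
    simp only [s, Fintype.sum_bool]; split_ifs <;> simp_all; norm_num
  let e := Fintype.equivFin (Fin m × Fin n × Bool × Bool)
  refine ⟨_, fun l => B (e.symm l).1 (e.symm l).2.1 / 4, fun l => s (e.symm l).2.2.1 (e.symm l).1,
    fun l => s (e.symm l).2.2.2 (e.symm l).2.1, fun l i => hs_sign _ _ _,
    fun l j => hs_sign _ _ _, ?_⟩
  ext i' j'
  rw [Matrix.sum_apply, e.symm.sum_comp fun q =>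
    ((B q.1 q.2.1 / 4) • vecMulVec (s q.2.2.1 q.1) (s q.2.2.2 q.2.1)) i' j']
  simp only [Fintype.sum_prod_type, Matrix.smul_apply, vecMulVec_apply, smul_eq_mul,
    ← mul_sum, ← sum_mul, hs_sum]
  simp only [mul_ite, ite_mul, zero_mul, mul_zero, sum_ite_eq, mem_univ, ↓reduceIte]
  ring

theorem abs_apply_le_nu {m n : ℕ} (B : Matrix (Fin m) (Fin n) ℝ) (i : Fin m) (j : Fin n) :
    |B i j| ≤ nu B := by
  obtain ⟨k, c, x, y, hx, hy, hB⟩ := exists_signDecomposition B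
  refine le_csInf ⟨_, k, c, x, y, hx, hy, hB, rfl⟩ ?_
  rintro _ ⟨k, c, x, y, hx, hy, rfl, rfl⟩
  exact abs_sum_smul_vecMulVec_apply_le c x y
    (fun l i => abs_le_one_of_eq_one_or_eq_neg_one (hx l i))
    (fun l j => abs_le_one_of_eq_one_or_eq_neg_one (hy l j)) i j

theorem exists_signDecomposition_sum_abs_lt {m n : ℕ} {B : Matrix (Fin m) (Fin n) ℝ} {τ : ℝ}
    (h : nu B < τ) :
    ∃ (k : ℕ) (c : Fin k → ℝ) (x : Fin k → Fin m → ℝ) (y : Fin k → Fin n → ℝ),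
      (∀ l i, x l i = 1 ∨ x l i = -1) ∧ (∀ l j, y l j = 1 ∨ y l j = -1) ∧
      B = ∑ l, c l • vecMulVec (x l) (y l) ∧ ∑ l, |c l| < τ := by
  obtain ⟨k, c, x, y, hx, hy, hB⟩ := exists_signDecomposition B
  obtain ⟨_, ⟨k, c, x, y, hx, hy, hB, rfl⟩, hτ⟩ :=
    exists_lt_of_csInf_lt (by exact ⟨_, k, c, x, y, hx, hy, hB, rfl⟩) h
  exact ⟨k, c, x, y, hx, hy, hB, hτ⟩

theorem exists_gt_forall_sq_mul_lt {a b ν : ℝ} (ha : 0 < a) (hab : a < b) (hν : 0 < ν) :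
    ∃ τ, ν < τ ∧ ∀ w, 0 ≤ w → w < τ → w ^ 2 * a < ν ^ 2 * b := by
  have hba : 1 < b / a := (one_lt_div ha).mpr hab
  refine ⟨ν * √(b / a), lt_mul_of_one_lt_right hν ?_, fun w hw hwτ => ?_⟩
  · rw [← sqrt_one]; exact sqrt_lt_sqrt zero_le_one hba
  calc w ^ 2 * a < (ν * √(b / a)) ^ 2 * a := by gcongr
    _ = ν ^ 2 * b := by rw [mul_pow, sq_sqrt (by positivity)]; field_simp

theorem two_mul_mul_exp_lt_one {m n : ℕ} (hm : 0 < m) (hn : 0 < n) {ν w t : ℝ} {d : ℕ}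
    (ht : 0 < t) (hw : 0 < w) (hwν : w ^ 2 * log (2 * m * n) < ν ^ 2 * log (4 * m * n))
    (hd : 2 * ν ^ 2 * log (4 * m * n) / t ^ 2 ≤ d) :
    2 * m * n * exp (-(d * t ^ 2) / (2 * w ^ 2)) < 1 := by
  have hmn : (0 : ℝ) < 2 * m * n := by positivity
  have hd' : 2 * ν ^ 2 * log (4 * m * n) ≤ d * t ^ 2 := (div_le_iff₀ (by positivity)).mp hd
  have h_exponent : log (2 * m * n) < d * t ^ 2 / (2 * w ^ 2) := by
    rw [lt_div_iff₀ (by positivity)]; linarith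
  calc 2 * m * n * exp (-(d * t ^ 2) / (2 * w ^ 2)) < 2 * m * n * exp (-log (2 * m * n)) := by
        gcongr; rw [neg_div]; exact neg_lt_neg h_exponent
    _ = 1 := by rw [exp_neg, exp_log hmn, mul_inv_cancel₀ hmn.ne']

theorem mul_inv_one_sub_mul_mem_Icc {a b b' α t : ℝ} (ha : |a| ≤ 1) (h₁ : 1 ≤ a * b')
    (h₂ : a * b' ≤ α) (hb : |b - b'| < t) (ht : t < 1) :
    1 ≤ a * ((1 - t)⁻¹ * b) ∧ a * ((1 - t)⁻¹ * b) ≤ (α + t) / (1 - t) := by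
  have h_dev : |a * b - a * b'| < t := by
    rw [← mul_sub, abs_mul]; exact (mul_le_of_le_one_left (abs_nonneg _) ha).trans_lt hb
  have h1t : 0 < 1 - t := by linarith
  rw [abs_sub_lt_iff] at h_dev
  rw [mul_left_comm, ← div_eq_inv_mul, le_div_iff₀ h1t, div_le_div_iff_of_pos_right h1t]
  constructor <;> linarith

section SignMatrix

variable {m n : ℕ} {A : Matrix (Fin m) (Fin n) ℝ} {α : ℝ}

theorem nuApprox_set_nonempty (hA : ∀ i j, A i j = 1 ∨ A i j = -1) (hα : 1 ≤ α) :
    { s | ∃ B : Matrix (Fin m) (Fin n) ℝ,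
      (∀ i j, 1 ≤ A i j * B i j ∧ A i j * B i j ≤ α) ∧ s = nu B }.Nonempty := by
  refine ⟨_, α • A, fun i j => ?_, rfl⟩
  rcases hA i j with h | h <;> simp [h, hα]

theorem one_le_nuApprox (hm : 0 < m) (hn : 0 < n) (hA : ∀ i j, A i j = 1 ∨ A i j = -1)
    (hα : 1 ≤ α) : 1 ≤ nuApprox A α := by
  refine le_csInf (nuApprox_set_nonempty hA hα) ?_
  rintro _ ⟨B, hB, rfl⟩
  let i : Fin m := ⟨0, hm⟩
  let j : Fin n := ⟨0, hn⟩
  exact (one_le_abs_of_one_le_mul (abs_le_one_of_eq_one_or_eq_neg_one (hA i j)) (hB i j).1).trans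
    (abs_apply_le_nu B i j)

theorem exists_approx_nu_lt (hA : ∀ i j, A i j = 1 ∨ A i j = -1) (hα : 1 ≤ α) {τ : ℝ}
    (h : nuApprox A α < τ) :
    ∃ B : Matrix (Fin m) (Fin n) ℝ, (∀ i j, 1 ≤ A i j * B i j ∧ A i j * B i j ≤ α) ∧ nu B < τ := by
  obtain ⟨_, ⟨B, hB, rfl⟩, hτ⟩ := exists_lt_of_csInf_lt (nuApprox_set_nonempty hA hα) h
  exact ⟨B, hB, hτ⟩

theorem exists_rank_le_approx (hm : 0 < m) (hn : 0 < n) (hA : ∀ i j, A i j = 1 ∨ A i j = -1)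
    (hα : 1 ≤ α) {t : ℝ} (ht0 : 0 < t) (ht1 : t < 1) {d : ℕ}
    (hd : 2 * nuApprox A α ^ 2 * log (4 * m * n) / t ^ 2 ≤ d) :
    ∃ B : Matrix (Fin m) (Fin n) ℝ, B.rank ≤ d ∧
      ∀ i j, 1 ≤ A i j * B i j ∧ A i j * B i j ≤ (α + t) / (1 - t) := by
  have hA' i j : |A i j| ≤ 1 := abs_le_one_of_eq_one_or_eq_neg_one (hA i j)
  have hmn : (1 : ℝ) ≤ m * n := by exact_mod_cast Nat.mul_pos hm hn
  -- `nuApprox` need not be attained: we sample from a decomposition of weight slightly above it,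
  -- and the gap between `log (2mn)` (the union bound) and `log (4mn)` absorbs the excess.
  obtain ⟨τ, hτ, hτ_sq⟩ := exists_gt_forall_sq_mul_lt (a := log (2 * m * n))
    (b := log (4 * m * n)) (log_pos (by linarith))
    (log_lt_log (by positivity) (by linarith)) (one_pos.trans_le (one_le_nuApprox hm hn hA hα))
  obtain ⟨B', hB', hB'τ⟩ := exists_approx_nu_lt hA hα hτ
  obtain ⟨k, c, x, y, hx, hy, rfl, hcτ⟩ := exists_signDecomposition_sum_abs_lt hB'τ
  have hx' l i : |x l i| ≤ 1 := abs_le_one_of_eq_one_or_eq_neg_one (hx l i)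
  have hy' l j : |y l j| ≤ 1 := abs_le_one_of_eq_one_or_eq_neg_one (hy l j)
  have hc : 1 ≤ ∑ l, |c l| :=
    (one_le_abs_of_one_le_mul (hA' ⟨0, hm⟩ ⟨0, hn⟩) (hB' _ _).1).trans
      (abs_sum_smul_vecMulVec_apply_le c x y hx' hy' _ _)
  have hc0 : 0 < ∑ l, |c l| := one_pos.trans_le hc
  obtain ⟨B, hB_rank, hB⟩ := exists_rank_le_forall_abs_sub_lt c x y hx' hy' ht0 hc0
    (two_mul_mul_exp_lt_one hm hn ht0 hc0 (hτ_sq _ hc0.le hcτ) hd)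
  refine ⟨(1 - t)⁻¹ • B, ?_, fun i j => ?_⟩
  · rwa [rank_smul_of_mem_nonZeroDivisors B
      (mem_nonZeroDivisors_of_ne_zero (inv_ne_zero (sub_pos.mpr ht1).ne'))]
  · exact mul_inv_one_sub_mul_mem_Icc (hA' i j) (hB' i j).1 (hB' i j).2 (hB i j) ht1

end SignMatrix

theorem approxRank_le_rank {m n : ℕ} {A B : Matrix (Fin m) (Fin n) ℝ} {β : ℝ}
    (hB : ∀ i j, 1 ≤ A i j * B i j ∧ A i j * B i j ≤ β) : approxRank A β ≤ B.rank :=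
  Nat.sInf_le ⟨B, rfl, hB⟩

theorem dimension_reduction {m n : ℕ} (hm : 0 < m) (hn : 0 < n)
    (A : Matrix (Fin m) (Fin n) ℝ) (hA : ∀ i j, A i j = 1 ∨ A i j = -1)
    (α : ℝ) (hα : 1 ≤ α) (t : ℝ) (ht0 : 0 < t) (ht1 : t < 1) :
    (∃ B : Matrix (Fin m) (Fin n) ℝ,
        B.rank ≤ ⌈2 * nuApprox A α ^ 2 * Real.log (4 * m * n) / t ^ 2⌉₊ ∧
        ∀ i j, 1 ≤ A i j * B i j ∧ A i j * B i j ≤ (α + t) / (1 - t)) ∧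
    (approxRank A ((α + t) / (1 - t)) : ℝ) ≤
      2 * nuApprox A α ^ 2 * Real.log (4 * m * n) / t ^ 2 + 1 := by
  obtain ⟨B, hB_rank, hB⟩ := exists_rank_le_approx hm hn hA hα ht0 ht1 (Nat.le_ceil _)
  have hlog : 0 ≤ Real.log (4 * m * n) :=
    log_nonneg (by norm_cast; exact Nat.mul_pos (Nat.mul_pos (by norm_num) hm) hn)
  refine ⟨⟨B, hB_rank, hB⟩, ?_⟩
  calc (approxRank A ((α + t) / (1 - t)) : ℝ)
      ≤ ⌈2 * nuApprox A α ^ 2 * Real.log (4 * m * n) / t ^ 2⌉₊ := by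
        exact_mod_cast (approxRank_le_rank hB).trans hB_rank
    _ ≤ 2 * nuApprox A α ^ 2 * Real.log (4 * m * n) / t ^ 2 + 1 :=
        (Nat.ceil_lt_add_one (by positivity)).le
end
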